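/- arXiv:1807.00993 — 6 statements merged into one kernel-verified Lean document; each statement's English description precedes it below -/
import Mathlib

section
/- Let X be a nonempty finite type. Let p_d and p_n be pmfs on X with p_n x > 0 for every x, let 0 < α < 1 and ν > 0, and set q x = α * p_d x + (1 - α) * p_n x (note q x > 0 for every x). Suppose KL(p_d ‖ p_n) = 0. If f : X → ℝ satisfies f x > 0 for every x and f maximizes the NCE objective with data distribution q and noise distribution p_n over all strictly positive functions on X (i.e., Ĵ(g) ≤ Ĵ(f) for every g : X → ℝ with g x > 0 for all x), then f = p_n = p_d. -/
open Real Finset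

/-- Algebraic rewriting of the pointwise NCE gap. -/
lemma nce_aux_key {ν a b : ℝ} (hν : 0 < ν) (ha : 0 < a) (hb : 0 < b) :
    b * Real.log (a / (a + ν * b)) + ν * b * Real.log (ν * b / (a + ν * b))
      - (b * Real.log (1 / (1 + ν)) + ν * b * Real.log (ν / (1 + ν)))
    = b * Real.log (a * (1 + ν) / (a + ν * b))
      + ν * b * Real.log (b * (1 + ν) / (a + ν * b)) := by
  have hs : 0 < a + ν * b := by positivity
  have h1ν : 0 < 1 + ν := by linarith
  have l1 : Real.log (a / (a + ν * b)) = Real.log a - Real.log (a + ν * b) :=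
    Real.log_div ha.ne' hs.ne'
  have l2 : Real.log (ν * b / (a + ν * b))
      = Real.log ν + Real.log b - Real.log (a + ν * b) := by
    rw [Real.log_div (by positivity) hs.ne', Real.log_mul hν.ne' hb.ne']
  have l3 : Real.log (1 / (1 + ν)) = - Real.log (1 + ν) := by
    rw [one_div, Real.log_inv]
  have l4 : Real.log (ν / (1 + ν)) = Real.log ν - Real.log (1 + ν) :=
    Real.log_div hν.ne' h1ν.ne'
  have l5 : Real.log (a * (1 + ν) / (a + ν * b))
      = Real.log a + Real.log (1 + ν) - Real.log (a + ν * b) := by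
    rw [Real.log_div (by positivity) hs.ne', Real.log_mul ha.ne' h1ν.ne']
  have l6 : Real.log (b * (1 + ν) / (a + ν * b))
      = Real.log b + Real.log (1 + ν) - Real.log (a + ν * b) := by
    rw [Real.log_div (by positivity) hs.ne', Real.log_mul hb.ne' h1ν.ne']
  rw [l1, l2, l3, l4, l5, l6]
  ring

/-- Pointwise inequality with strictness off the diagonal. -/
lemma nce_aux_le {ν a b : ℝ} (hν : 0 < ν) (ha : 0 < a) (hb : 0 < b) :
    b * Real.log (a * (1 + ν) / (a + ν * b))
      + ν * b * Real.log (b * (1 + ν) / (a + ν * b)) ≤ 0 ∧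
    (a ≠ b → b * Real.log (a * (1 + ν) / (a + ν * b))
      + ν * b * Real.log (b * (1 + ν) / (a + ν * b)) < 0) := by
  have hs : 0 < a + ν * b := by positivity
  have h1ν : 0 < 1 + ν := by linarith
  set u := a * (1 + ν) / (a + ν * b) with hu
  set v := b * (1 + ν) / (a + ν * b) with hv
  have hu0 : 0 < u := by positivity
  have hv0 : 0 < v := by positivity
  have hkey : b * u + ν * b * v = b * (1 + ν) := by
    rw [hu, hv]; field_simp
  have hlu : Real.log u ≤ u - 1 := Real.log_le_sub_one_of_pos hu0
  have hlv : Real.log v ≤ v - 1 := Real.log_le_sub_one_of_pos hv0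
  have h1 : b * Real.log u ≤ b * (u - 1) :=
    mul_le_mul_of_nonneg_left hlu hb.le
  have h2 : ν * b * Real.log v ≤ ν * b * (v - 1) :=
    mul_le_mul_of_nonneg_left hlv (by positivity)
  constructor
  · nlinarith
  · intro hne
    have hu1 : u ≠ 1 := by
      rw [hu]
      intro hcontra
      rw [div_eq_one_iff_eq hs.ne'] at hcontra
      apply hne
      have : ν * a = ν * b := by linarith [hcontra]
      exact mul_left_cancel₀ hν.ne' this
    have hlu' : Real.log u < u - 1 := Real.log_lt_sub_one_of_pos hu0 hu1
    have h1' : b * Real.log u < b * (u - 1) :=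
      mul_lt_mul_of_pos_left hlu' hb
    nlinarith

/-- DNCE consistency (Prop. part (ii)): if `KL(p_d ‖ p_n) = 0` and a strictly positive `f`
maximizes the NCE objective with data distribution `q = α p_d + (1-α) p_n` and noise
distribution `p_n`, then `f = p_n = p_d`. -/
theorem stmt_0 {X : Type*} [Fintype X] [Nonempty X]
    (pd pn : X → ℝ)
    (hpd0 : ∀ x, 0 ≤ pd x) (hpd1 : ∑ x, pd x = 1)
    (hpn0 : ∀ x, 0 < pn x) (hpn1 : ∑ x, pn x = 1)
    (α ν : ℝ) (hα0 : 0 < α) (hα1 : α < 1) (hν : 0 < ν)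
    (q : X → ℝ) (hq : ∀ x, q x = α * pd x + (1 - α) * pn x)
    (hKL : ∑ x, pd x * Real.log (pd x / pn x) = 0)
    (f : X → ℝ) (hf : ∀ x, 0 < f x)
    (hmax : ∀ g : X → ℝ, (∀ x, 0 < g x) →
      (∑ x, q x * Real.log (g x / (g x + ν * pn x))
        + ν * ∑ x, pn x * Real.log (ν * pn x / (g x + ν * pn x)))
      ≤ (∑ x, q x * Real.log (f x / (f x + ν * pn x))
        + ν * ∑ x, pn x * Real.log (ν * pn x / (f x + ν * pn x)))) :
    f = pn ∧ pn = pd := by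
  -- Step 1: pd = pn from KL = 0 (Gibbs equality case)
  have hterm : ∀ x, 0 ≤ pd x * Real.log (pd x / pn x) - pd x + pn x := by
    intro x
    rcases eq_or_lt_of_le (hpd0 x) with h | h
    · simp [← h]; exact (hpn0 x).le
    · have hlog := Real.log_le_sub_one_of_pos
        (div_pos (hpn0 x) h)
      have hrw : Real.log (pd x / pn x) = - Real.log (pn x / pd x) := by
        rw [← Real.log_inv, inv_div]
      have hmul : pd x * Real.log (pn x / pd x) ≤ pd x * (pn x / pd x - 1) :=
        mul_le_mul_of_nonneg_left hlog h.le
      have hcan : pd x * (pn x / pd x) = pn x := by field_simp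
      rw [hrw]
      nlinarith
  have hsum0 : ∑ x, (pd x * Real.log (pd x / pn x) - pd x + pn x) = 0 := by
    rw [Finset.sum_add_distrib, Finset.sum_sub_distrib, hKL, hpd1, hpn1]; ring
  have hzero := (Finset.sum_eq_zero_iff_of_nonneg
    (fun x _ => hterm x)).mp hsum0
  have hpdpn : ∀ x, pd x = pn x := by
    intro x
    by_contra hne
    have hx := hzero x (mem_univ x)
    rcases eq_or_lt_of_le (hpd0 x) with h | h
    · rw [← h] at hx
      simp at hx
      exact (hpn0 x).ne' hx
    · have hratio : pn x / pd x ≠ 1 := by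
        intro hc
        rw [div_eq_one_iff_eq h.ne'] at hc
        exact hne hc.symm
      have hlog := Real.log_lt_sub_one_of_pos
        (div_pos (hpn0 x) h) hratio
      have hrw : Real.log (pd x / pn x) = - Real.log (pn x / pd x) := by
        rw [← Real.log_inv, inv_div]
      have hmul : pd x * Real.log (pn x / pd x) < pd x * (pn x / pd x - 1) :=
        mul_lt_mul_of_pos_left hlog h
      have hcan : pd x * (pn x / pd x) = pn x := by field_simp
      rw [hrw] at hx
      nlinarith
  -- Step 2: q = pn
  have hqpn : ∀ x, q x = pn x := by
    intro x; rw [hq x, hpdpn x]; ring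
  -- Step 3: maximality at f versus g = pn
  have hJ := hmax pn hpn0
  simp only [hqpn] at hJ
  -- pointwise gap T x
  have h1ν : 0 < 1 + ν := by linarith
  have hconst : ∀ x,
      pn x * Real.log (pn x / (pn x + ν * pn x))
        + ν * pn x * Real.log (ν * pn x / (pn x + ν * pn x))
      = pn x * Real.log (1 / (1 + ν)) + ν * pn x * Real.log (ν / (1 + ν)) := by
    intro x
    have hx := hpn0 x
    have e1 : pn x / (pn x + ν * pn x) = 1 / (1 + ν) := by
      rw [div_eq_div_iff (by positivity) (by positivity)]; ring
    have e2 : ν * pn x / (pn x + ν * pn x) = ν / (1 + ν) := by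
      rw [div_eq_div_iff (by positivity) (by positivity)]; ring
    rw [e1, e2]
  set T : X → ℝ := fun x =>
    (pn x * Real.log (f x / (f x + ν * pn x))
      + ν * pn x * Real.log (ν * pn x / (f x + ν * pn x)))
    - (pn x * Real.log (1 / (1 + ν)) + ν * pn x * Real.log (ν / (1 + ν)))
    with hT
  have hTle : ∀ x, T x ≤ 0 := by
    intro x
    rw [hT]
    simp only
    rw [nce_aux_key hν (hf x) (hpn0 x)]
    exact (nce_aux_le hν (hf x) (hpn0 x)).1
  have hTlt : ∀ x, f x ≠ pn x → T x < 0 := by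
    intro x hne
    rw [hT]
    simp only
    rw [nce_aux_key hν (hf x) (hpn0 x)]
    exact (nce_aux_le hν (hf x) (hpn0 x)).2 hne
  have hsumT : 0 ≤ ∑ x, T x := by
    have e1 : ∑ x, pn x * Real.log (pn x / (pn x + ν * pn x))
        + ν * ∑ x, pn x * Real.log (ν * pn x / (pn x + ν * pn x))
        = ∑ x, (pn x * Real.log (1 / (1 + ν)) + ν * pn x * Real.log (ν / (1 + ν))) := by
      rw [Finset.mul_sum, ← Finset.sum_add_distrib]
      exact Finset.sum_congr rfl fun x _ => by rw [← hconst x]; ring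
    have e2 : ∑ x, pn x * Real.log (f x / (f x + ν * pn x))
        + ν * ∑ x, pn x * Real.log (ν * pn x / (f x + ν * pn x))
        = ∑ x, (pn x * Real.log (f x / (f x + ν * pn x))
            + ν * pn x * Real.log (ν * pn x / (f x + ν * pn x))) := by
      rw [Finset.mul_sum, ← Finset.sum_add_distrib]
      exact Finset.sum_congr rfl fun x _ => by ring
    have e3 : ∑ x, T x
        = ∑ x, (pn x * Real.log (f x / (f x + ν * pn x))
            + ν * pn x * Real.log (ν * pn x / (f x + ν * pn x)))
          - ∑ x, (pn x * Real.log (1 / (1 + ν)) + ν * pn x * Real.log (ν / (1 + ν))) := by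
      rw [← Finset.sum_sub_distrib]
    rw [e1, e2] at hJ
    rw [e3]
    linarith
  have hTzero : ∀ x, T x = 0 := by
    by_contra hc
    push_neg at hc
    obtain ⟨x0, hx0⟩ := hc
    have hlt : T x0 < 0 := lt_of_le_of_ne (hTle x0) hx0
    have hstrict : ∑ x, T x < ∑ _x : X, (0 : ℝ) :=
      Finset.sum_lt_sum (fun i _ => hTle i) ⟨x0, mem_univ x0, hlt⟩
    simp at hstrict
    linarith
  have hfpn : ∀ x, f x = pn x := by
    intro x
    by_contra hne
    exact absurd (hTzero x) (ne_of_lt (hTlt x hne))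
  exact ⟨funext hfpn, funext fun x => (hpdpn x).symm⟩
end

section
/- Let X be a nonempty finite type, let d be a pmf on X with d x > 0 for every x, let p_n be a pmf on X with p_n x > 0 for every x, and let ν > 0. Then for every f : X → ℝ with f x > 0 for all x, J(f) ≤ J(d), with equality if and only if f = d. In particular, the function f = d is the unique maximizer of the NCE objective over strictly positive functions on X. -/
open Real Finset

lemma log_ge_one_sub_inv {u : ℝ} (hu : 0 < u) : 1 - 1/u ≤ Real.log u := by
  have h := Real.log_le_sub_one_of_pos (show (0:ℝ) < 1/u by positivity)
  rw [Real.log_div one_ne_zero hu.ne', Real.log_one] at h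
  linarith

lemma log_gt_one_sub_inv {u : ℝ} (hu : 0 < u) (hu1 : u ≠ 1) : 1 - 1/u < Real.log u := by
  have h1u : (1:ℝ)/u ≠ 1 := by
    intro h
    apply hu1
    field_simp at h
    linarith
  have h := Real.log_lt_sub_one_of_pos (show (0:ℝ) < 1/u by positivity) h1u
  rw [Real.log_div one_ne_zero hu.ne', Real.log_one] at h
  linarith

lemma nce_key (a c t : ℝ) (ha : 0 < a) (hc : 0 < c) (ht : 0 < t) :
    a * Real.log (t/(t+c)) + c * Real.log (c/(t+c))
      ≤ a * Real.log (a/(a+c)) + c * Real.log (c/(a+c)) ∧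
    (a * Real.log (t/(t+c)) + c * Real.log (c/(t+c))
      = a * Real.log (a/(a+c)) + c * Real.log (c/(a+c)) ↔ t = a) := by
  have htc : 0 < t + c := by linarith
  have hac : 0 < a + c := by linarith
  set u : ℝ := a * (t + c) / (t * (a + c)) with hu_def
  set v : ℝ := (t + c) / (a + c) with hv_def
  have hu : 0 < u := by positivity
  have hv : 0 < v := by positivity
  have hlogu : Real.log u = Real.log a - Real.log t + Real.log (t+c) - Real.log (a+c) := by
    rw [hu_def, Real.log_div (by positivity) (by positivity),
      Real.log_mul ha.ne' htc.ne', Real.log_mul ht.ne' hac.ne']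
    ring
  have hlogv : Real.log v = Real.log (t+c) - Real.log (a+c) := by
    rw [hv_def, Real.log_div htc.ne' hac.ne']
  have hD : (a * Real.log (a/(a+c)) + c * Real.log (c/(a+c)))
      - (a * Real.log (t/(t+c)) + c * Real.log (c/(t+c)))
      = a * Real.log u + c * Real.log v := by
    rw [Real.log_div ht.ne' htc.ne', Real.log_div hc.ne' htc.ne',
      Real.log_div ha.ne' hac.ne', Real.log_div hc.ne' hac.ne', hlogu, hlogv]
    ring
  have hsum0 : a * (1 - 1/u) + c * (1 - 1/v) = 0 := by
    rw [hu_def, hv_def]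
    field_simp
    ring
  have hle : a * Real.log (t/(t+c)) + c * Real.log (c/(t+c))
      ≤ a * Real.log (a/(a+c)) + c * Real.log (c/(a+c)) := by
    have h1 := log_ge_one_sub_inv hu
    have h2 := log_ge_one_sub_inv hv
    nlinarith [mul_le_mul_of_nonneg_left h1 ha.le, mul_le_mul_of_nonneg_left h2 hc.le]
  refine ⟨hle, ?_, ?_⟩
  · intro heq
    by_contra hta
    have hu1 : u ≠ 1 := by
      rw [hu_def]
      intro h
      rw [div_eq_one_iff_eq (by positivity)] at h
      apply hta
      have : t * c = a * c := by nlinarith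
      exact (mul_right_cancel₀ hc.ne' this).symm ▸ rfl
    have h1 := log_gt_one_sub_inv hu hu1
    have h2 := log_ge_one_sub_inv hv
    have : 0 < a * Real.log u + c * Real.log v := by
      nlinarith [mul_lt_mul_of_pos_left h1 ha, mul_le_mul_of_nonneg_left h2 hc.le]
    linarith [hD ▸ this, heq]
  · rintro rfl
    rfl

/-- NCE consistency: with data distribution `d` (strictly positive pmf), noise `pn`
(strictly positive pmf) and `ν > 0`, every strictly positive `f` satisfies `J f ≤ J d`,
with equality iff `f = d`; hence `d` is the unique maximizer of the NCE objective. -/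
theorem stmt_2 {X : Type*} [Fintype X] [Nonempty X]
    (d pn : X → ℝ)
    (hd0 : ∀ x, 0 < d x) (hd1 : ∑ x, d x = 1)
    (hpn0 : ∀ x, 0 < pn x) (hpn1 : ∑ x, pn x = 1)
    (ν : ℝ) (hν : 0 < ν)
    (J : (X → ℝ) → ℝ)
    (hJ : ∀ g : X → ℝ, J g = ∑ x, d x * Real.log (g x / (g x + ν * pn x))
        + ν * ∑ x, pn x * Real.log (ν * pn x / (g x + ν * pn x))) :
    ∀ f : X → ℝ, (∀ x, 0 < f x) → (J f ≤ J d ∧ (J f = J d ↔ f = d)) := by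
  intro f hf
  have hJ' : ∀ g : X → ℝ, J g = ∑ x, (d x * Real.log (g x / (g x + ν * pn x))
      + (ν * pn x) * Real.log (ν * pn x / (g x + ν * pn x))) := by
    intro g
    rw [hJ g, Finset.mul_sum, ← Finset.sum_add_distrib]
    congr 1; funext x; ring
  have hkey := fun x => nce_key (d x) (ν * pn x) (f x) (hd0 x)
    (mul_pos hν (hpn0 x)) (hf x)
  have hterm : ∀ x ∈ Finset.univ (α := X),
      (d x * Real.log (f x / (f x + ν * pn x))
        + (ν * pn x) * Real.log (ν * pn x / (f x + ν * pn x)))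
      ≤ (d x * Real.log (d x / (d x + ν * pn x))
        + (ν * pn x) * Real.log (ν * pn x / (d x + ν * pn x))) :=
    fun x _ => (hkey x).1
  have hle : J f ≤ J d := by
    rw [hJ' f, hJ' d]
    exact Finset.sum_le_sum hterm
  refine ⟨hle, ?_, ?_⟩
  · intro heq
    rw [hJ' f, hJ' d] at heq
    have := (Finset.sum_eq_sum_iff_of_le hterm).mp heq
    funext x
    exact (hkey x).2.mp (this x (Finset.mem_univ x))
  · rintro rfl
    rfl
end

section
/- Let c > 0 and d ≥ 0 be real numbers. The function h : ℝ → ℝ defined by h(a) = d * log (exp a / (exp a + c)) + c * log (c / (exp a + c)) is strictly concave on ℝ; moreover, if d > 0 then h has a unique global maximizer, attained at a = log d. -/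
/-!
Since `log (exp a / (exp a + c)) = a - log (exp a + c)`, the function is
`d * a + c * log c - (d + c) * log (exp a + c)`, with derivative `c * (d + c) / (exp a + c) - c`.
This derivative is strictly decreasing when `d + c > 0`, giving strict concavity, and vanishes
exactly where `exp a = d`; a critical point of a concave function is a global maximum, and a
strictly concave function has at most one.
-/

open Real Set

theorem ConcaveOn.isMaxOn_of_hasDerivAt_eq_zero {S : Set ℝ} {f : ℝ → ℝ} {x : ℝ}
    (hf : ConcaveOn ℝ S f) (hx : x ∈ interior S) (hf' : HasDerivAt f 0 x) : IsMaxOn f S x := by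
  have hmin : IsMinOn (-f) S x :=
    hf.neg.isMinOn_of_rightDeriv_eq_zero hx <| by
      simpa using hf'.neg.hasDerivWithinAt.derivWithin (uniqueDiffWithinAt_Ioi x)
  exact fun y hy => by simpa using hmin hy

/-- Up to an additive constant, the log-likelihood of the count `d` under the negative binomial
law with shape `c` and mean `exp a`. -/
noncomputable def negBinomialLogLik (c d a : ℝ) : ℝ :=
  d * log (exp a / (exp a + c)) + c * log (c / (exp a + c))

section
variable {c d : ℝ}

theorem negBinomialLogLik_eq (hc : 0 < c) (a : ℝ) :
    negBinomialLogLik c d a = d * a + c * log c - (d + c) * log (exp a + c) := by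
  have hpos : exp a + c ≠ 0 := by positivity
  rw [negBinomialLogLik, log_div (exp_ne_zero a) hpos, log_div hc.ne' hpos, log_exp]
  ring

theorem hasDerivAt_negBinomialLogLik (hc : 0 < c) (a : ℝ) :
    HasDerivAt (negBinomialLogLik c d) (c * (d + c) / (exp a + c) - c) a := by
  have hpos : exp a + c ≠ 0 := by positivity
  have hlog : HasDerivAt (fun x => log (exp x + c)) (exp a / (exp a + c)) a :=
    ((hasDerivAt_exp a).add_const c).log hpos
  have hsum : HasDerivAt (fun x => d * x + c * log c - (d + c) * log (exp x + c))
      (d - (d + c) * (exp a / (exp a + c))) a := by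
    simpa using (((hasDerivAt_id a).const_mul d).add_const (c * log c)).fun_sub
      (hlog.const_mul (d + c))
  rw [funext (negBinomialLogLik_eq hc)]
  convert hsum using 1
  field_simp
  ring

theorem strictConcaveOn_negBinomialLogLik (hc : 0 < c) (hdc : 0 < d + c) :
    StrictConcaveOn ℝ univ (negBinomialLogLik c d) := by
  have hderiv : deriv (negBinomialLogLik c d) = fun a => c * (d + c) / (exp a + c) - c :=
    funext fun a => (hasDerivAt_negBinomialLogLik hc a).deriv
  refine StrictAnti.strictConcaveOn_univ_of_deriv ?_ ?_
  · exact continuous_iff_continuousAt.mpr fun a =>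
      (hasDerivAt_negBinomialLogLik hc a).continuousAt
  · intro a b hab
    simp only [hderiv]
    gcongr

theorem isMaxOn_negBinomialLogLik_log (hc : 0 < c) (hd : 0 < d) :
    IsMaxOn (negBinomialLogLik c d) univ (log d) := by
  refine (strictConcaveOn_negBinomialLogLik hc (by linarith)).concaveOn
    |>.isMaxOn_of_hasDerivAt_eq_zero (by simp) ?_
  convert hasDerivAt_negBinomialLogLik hc (log d) using 1
  rw [exp_log hd, mul_div_cancel_right₀ c (by positivity : d + c ≠ 0), sub_self]

end

/-- The function `h a = d * log (exp a / (exp a + c)) + c * log (c / (exp a + c))` is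
strictly concave on ℝ for `c > 0`, `d ≥ 0`; if `d > 0` it has a unique global maximizer,
attained at `a = log d`. -/
theorem stmt_4 (c d : ℝ) (hc : 0 < c) (hd : 0 ≤ d)
    (h : ℝ → ℝ)
    (hh : ∀ a, h a = d * Real.log (Real.exp a / (Real.exp a + c))
        + c * Real.log (c / (Real.exp a + c))) :
    StrictConcaveOn ℝ Set.univ h ∧
      (0 < d → (∀ a, h a ≤ h (Real.log d)) ∧
        (∀ a, (∀ b, h b ≤ h a) → a = Real.log d)) := by
  obtain rfl : h = negBinomialLogLik c d := funext hh
  have hconc := strictConcaveOn_negBinomialLogLik hc (by linarith)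
  refine ⟨hconc, fun hd_pos => ?_⟩
  have hmax := isMaxOn_negBinomialLogLik_log hc hd_pos
  exact ⟨fun a => hmax (mem_univ a), fun a ha =>
    hconc.eq_of_isMaxOn (fun b _ => ha b) hmax (mem_univ a) (mem_univ _)⟩
end

section
/- Let X be a nonempty finite type, let d be a pmf on X with d x > 0 for every x, let p_n be a pmf on X with p_n x > 0 for every x, and let ν > 0. If f : X → ℝ satisfies f x > 0 for every x and f maximizes the NCE objective over all strictly positive functions on X (i.e., J(g) ≤ J(f) for every g : X → ℝ with g x > 0 for all x), then Σ_x f x = 1; that is, the maximizer of the NCE objective is automatically a normalized probability mass function even though no normalization constraint is imposed. -/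
open Real Finset

lemma nce_key_lt (a p t : ℝ) (ha : 0 < a) (hp : 0 < p) (ht : 0 < t) (hne : t ≠ a) :
    a * Real.log (t/(t+p)) + p * Real.log (p/(t+p))
      < a * Real.log (a/(a+p)) + p * Real.log (p/(a+p)) := by
  have htp : 0 < t + p := by linarith
  have hap : 0 < a + p := by linarith
  set u := t*(a+p)/(a*(t+p)) with hu
  set v := (a+p)/(t+p) with hv
  have hupos : 0 < u := div_pos (mul_pos ht hap) (mul_pos ha htp)
  have hvpos : 0 < v := div_pos hap htp
  have hu1 : u ≠ 1 := by
    intro h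
    rw [hu, div_eq_one_iff_eq (mul_pos ha htp).ne'] at h
    exact hne (mul_right_cancel₀ hp.ne' (by linear_combination h : t * p = a * p))
  have h1 : Real.log u < u - 1 := Real.log_lt_sub_one_of_pos hupos hu1
  have h2 : Real.log v ≤ v - 1 := Real.log_le_sub_one_of_pos hvpos
  have hlogu : Real.log u = Real.log t + Real.log (a+p) - Real.log a - Real.log (t+p) := by
    rw [hu, Real.log_div (mul_pos ht hap).ne' (mul_pos ha htp).ne',
        Real.log_mul ht.ne' hap.ne', Real.log_mul ha.ne' htp.ne']
    ring
  have hlogv : Real.log v = Real.log (a+p) - Real.log (t+p) := by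
    rw [hv, Real.log_div hap.ne' htp.ne']
  have hsum : a * u + p * v = a + p := by
    rw [hu, hv]
    field_simp
  have hdiff : (a * Real.log (t/(t+p)) + p * Real.log (p/(t+p)))
      - (a * Real.log (a/(a+p)) + p * Real.log (p/(a+p)))
      = a * Real.log u + p * Real.log v := by
    rw [hlogu, hlogv, Real.log_div ht.ne' htp.ne', Real.log_div hp.ne' htp.ne',
        Real.log_div ha.ne' hap.ne', Real.log_div hp.ne' hap.ne']
    ring
  have e1 : a * (u - 1) = a * u - a := by ring
  have e2 : p * (v - 1) = p * v - p := by ring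
  have m1 := mul_lt_mul_of_pos_left h1 ha
  have m2 := mul_le_mul_of_nonneg_left h2 hp.le
  linarith

/-- Self-normalization of NCE: a strictly positive maximizer `f` of the NCE objective
(with strictly positive data pmf `d`, strictly positive noise pmf `pn` and `ν > 0`)
is automatically normalized: `∑ x, f x = 1`. -/
theorem stmt_5 {X : Type*} [Fintype X] [Nonempty X]
    (d pn : X → ℝ)
    (hd0 : ∀ x, 0 < d x) (hd1 : ∑ x, d x = 1)
    (hpn0 : ∀ x, 0 < pn x) (hpn1 : ∑ x, pn x = 1)
    (ν : ℝ) (hν : 0 < ν)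
    (f : X → ℝ) (hf : ∀ x, 0 < f x)
    (hmax : ∀ g : X → ℝ, (∀ x, 0 < g x) →
      (∑ x, d x * Real.log (g x / (g x + ν * pn x))
        + ν * ∑ x, pn x * Real.log (ν * pn x / (g x + ν * pn x)))
      ≤ (∑ x, d x * Real.log (f x / (f x + ν * pn x))
        + ν * ∑ x, pn x * Real.log (ν * pn x / (f x + ν * pn x)))) :
    ∑ x, f x = 1 := by
  have hJ : ∀ g : X → ℝ,
      (∑ x, d x * Real.log (g x / (g x + ν * pn x))
        + ν * ∑ x, pn x * Real.log (ν * pn x / (g x + ν * pn x)))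
      = ∑ x, (d x * Real.log (g x / (g x + ν * pn x))
        + (ν * pn x) * Real.log (ν * pn x / (g x + ν * pn x))) := by
    intro g
    rw [Finset.mul_sum, ← Finset.sum_add_distrib]
    exact Finset.sum_congr rfl (fun x _ => by ring)
  have hfd : ∀ x, f x = d x := by
    by_contra h
    push_neg at h
    obtain ⟨x0, hx0⟩ := h
    have hlt : (∑ x, (d x * Real.log (f x / (f x + ν * pn x))
        + (ν * pn x) * Real.log (ν * pn x / (f x + ν * pn x))))
        < ∑ x, (d x * Real.log (d x / (d x + ν * pn x))
        + (ν * pn x) * Real.log (ν * pn x / (d x + ν * pn x))) := by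
      apply Finset.sum_lt_sum
      · intro x _
        by_cases hx : f x = d x
        · rw [hx]
        · exact (nce_key_lt (d x) (ν * pn x) (f x) (hd0 x)
            (mul_pos hν (hpn0 x)) (hf x) hx).le
      · exact ⟨x0, Finset.mem_univ x0, nce_key_lt (d x0) (ν * pn x0) (f x0) (hd0 x0)
          (mul_pos hν (hpn0 x0)) (hf x0) hx0⟩
    have hm := hmax d hd0
    rw [hJ f, hJ d] at hm
    linarith
  calc ∑ x, f x = ∑ x, d x := Finset.sum_congr rfl (fun x _ => hfd x)
    _ = 1 := hd1
end

section
/- Let X be a nonempty finite type, let d be a pmf on X, let p_n be a pmf on X with p_n x > 0 for every x, and let ν > 0. For f : X → ℝ with f x > 0 for all x, define σ_f x = f x / (f x + ν * p_n x) and σ_d x = d x / (d x + ν * p_n x). Then J(d) − J(f) = Σ_x (d x + ν * p_n x) * D_B(σ_d x ‖ σ_f x), where D_B(u ‖ v) = u * log (u / v) + (1 − u) * log ((1 − u) / (1 − v)) is the Bernoulli KL divergence (with the convention 0 * log 0 = 0). In particular J(f) ≤ J(d). -/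
open Real Finset

/-!
Pointwise, the NCE objective is a weighted binary cross-entropy: with `s = d x + ν pn x`,
the summand of `J g` at `x` is `s` times `σ_d log σ_g + (1 - σ_d) log (1 - σ_g)`, where
`σ_g = g / (g + ν pn)`. Evaluated at `g = d` this is `s` times the negative entropy of `σ_d`,
so the gap `J d - J f` is pointwise `s · D_B(σ_d ‖ σ_f)`, which is nonnegative by
`log t ≥ 1 - 1/t`.
-/

/-- Mathlib's `log 0 = 0` makes the convention `0 · log 0 = 0` automatic. -/
noncomputable def bernoulliKL (u v : ℝ) : ℝ :=
  u * log (u / v) + (1 - u) * log ((1 - u) / (1 - v))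

lemma sub_le_mul_log_div {a c : ℝ} (ha : 0 ≤ a) (hc : 0 < c) :
    a - c ≤ a * log (a / c) := by
  rcases ha.eq_or_lt with rfl | ha
  · simpa using hc.le
  · have h := mul_le_mul_of_nonneg_left (one_sub_inv_le_log_of_pos (div_pos ha hc)) ha.le
    rwa [inv_div, mul_sub, mul_one, mul_div_cancel₀ _ ha.ne'] at h

lemma bernoulliKL_nonneg {u v : ℝ} (hu0 : 0 ≤ u) (hu1 : u ≤ 1) (hv0 : 0 < v) (hv1 : v < 1) :
    0 ≤ bernoulliKL u v := by
  have h₁ := sub_le_mul_log_div hu0 hv0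
  have h₂ := sub_le_mul_log_div (sub_nonneg.2 hu1) (sub_pos.2 hv1)
  unfold bernoulliKL
  linarith

lemma mul_log_div_eq_sub {a x y : ℝ} (hx : a ≠ 0 → x ≠ 0) (hy : y ≠ 0) :
    a * log (x / y) = a * log x - a * log y := by
  rcases eq_or_ne a 0 with rfl | ha
  · simp
  · rw [log_div (hx ha) hy, mul_sub]

lemma mul_log_div_add_sub_mul_log_div_add {A B F : ℝ} (hA : 0 ≤ A) (hB : 0 < B) (hF : 0 < F) :
    (A * log (A / (A + B)) + B * log (B / (A + B)))
        - (A * log (F / (F + B)) + B * log (B / (F + B)))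
      = (A + B) * bernoulliKL (A / (A + B)) (F / (F + B)) := by
  have hAB : A + B ≠ 0 := by positivity
  have hFB : F + B ≠ 0 := by positivity
  have one_sub_A : 1 - A / (A + B) = B / (A + B) := by field_simp; ring
  have one_sub_F : 1 - F / (F + B) = B / (F + B) := by field_simp; ring
  rw [bernoulliKL, one_sub_A, one_sub_F, mul_add, ← mul_assoc, ← mul_assoc,
    mul_div_cancel₀ _ hAB, mul_div_cancel₀ _ hAB,
    mul_log_div_eq_sub (y := F / (F + B)) (fun hA0 => div_ne_zero hA0 hAB) (by positivity),
    mul_log_div_eq_sub (y := B / (F + B)) (fun _ => by positivity) (by positivity)]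
  ring

theorem stmt_6_general {X : Type*} [Fintype X]
    (d pn : X → ℝ)
    (hd0 : ∀ x, 0 ≤ d x)
    (hpn0 : ∀ x, 0 < pn x)
    (ν : ℝ) (hν : 0 < ν)
    (f : X → ℝ) (hf : ∀ x, 0 < f x)
    (J : (X → ℝ) → ℝ)
    (hJ : ∀ g : X → ℝ, J g = ∑ x, d x * Real.log (g x / (g x + ν * pn x))
        + ν * ∑ x, pn x * Real.log (ν * pn x / (g x + ν * pn x)))
    (σf σd : X → ℝ)
    (hσf : ∀ x, σf x = f x / (f x + ν * pn x))
    (hσd : ∀ x, σd x = d x / (d x + ν * pn x)) :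
    J d - J f = ∑ x, (d x + ν * pn x) *
        (σd x * Real.log (σd x / σf x)
          + (1 - σd x) * Real.log ((1 - σd x) / (1 - σf x))) ∧
      J f ≤ J d := by
  have hB : ∀ x, 0 < ν * pn x := fun x => mul_pos hν (hpn0 x)
  have hgap : J d - J f = ∑ x, (d x + ν * pn x) * bernoulliKL (σd x) (σf x) := by
    simp only [hJ, hσd, hσf, mul_sum, ← mul_assoc,
      ← mul_log_div_add_sub_mul_log_div_add (hd0 _) (hB _) (hf _)]
    rw [sum_sub_distrib, sum_add_distrib, sum_add_distrib]
  have hgap_nonneg : 0 ≤ ∑ x, (d x + ν * pn x) * bernoulliKL (σd x) (σf x) := by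
    refine sum_nonneg fun x _ => ?_
    have hs : 0 < d x + ν * pn x := add_pos_of_nonneg_of_pos (hd0 x) (hB x)
    have ht : 0 < f x + ν * pn x := add_pos (hf x) (hB x)
    rw [hσd, hσf]
    refine mul_nonneg hs.le <| bernoulliKL_nonneg (div_nonneg (hd0 x) hs.le) ((div_le_one hs).2 (by linarith [hB x]))
      (div_pos (hf x) ht) ((div_lt_one ht).2 (by linarith [hB x]))
  exact ⟨hgap, by linarith⟩

/-- The NCE gap `J(d) - J(f)` equals a weighted sum of Bernoulli KL divergences between
the posterior probabilities `σ_d` and `σ_f`; in particular `J f ≤ J d`. -/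
theorem stmt_6 {X : Type*} [Fintype X] [Nonempty X]
    (d pn : X → ℝ)
    (hd0 : ∀ x, 0 ≤ d x) (hd1 : ∑ x, d x = 1)
    (hpn0 : ∀ x, 0 < pn x) (hpn1 : ∑ x, pn x = 1)
    (ν : ℝ) (hν : 0 < ν)
    (f : X → ℝ) (hf : ∀ x, 0 < f x)
    (J : (X → ℝ) → ℝ)
    (hJ : ∀ g : X → ℝ, J g = ∑ x, d x * Real.log (g x / (g x + ν * pn x))
        + ν * ∑ x, pn x * Real.log (ν * pn x / (g x + ν * pn x)))
    (σf σd : X → ℝ)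
    (hσf : ∀ x, σf x = f x / (f x + ν * pn x))
    (hσd : ∀ x, σd x = d x / (d x + ν * pn x)) :
    J d - J f = ∑ x, (d x + ν * pn x) *
        (σd x * Real.log (σd x / σf x)
          + (1 - σd x) * Real.log ((1 - σd x) / (1 - σf x))) ∧
      J f ≤ J d :=
  stmt_6_general d pn hd0 hpn0 ν hν f hf J hJ σf σd hσf hσd
end

section
/- Let X be a nonempty finite type, let p_d be a pmf on X, let p_n be a pmf on X with p_n x > 0 for every x, let ν > 0, and let k ∈ ℕ. Let φ : ℝ^k → X → ℝ be such that for every x the map θ ↦ φ θ x is differentiable on ℝ^k. Define J : ℝ^k → ℝ by J(θ) = Σ_x p_d x * log (exp (φ θ x) / (exp (φ θ x) + ν * p_n x)) + ν * Σ_x p_n x * log (ν * p_n x / (exp (φ θ x) + ν * p_n x)), and define P0(θ, x) = exp (φ θ x) / (exp (φ θ x) + ν * p_n x) and P1(θ, x) = 1 − P0(θ, x). Then J is differentiable and its gradient at every θ ∈ ℝ^k is ∇J(θ) = Σ_x p_d x * P1(θ, x) * ∇_θ φ θ x − ν * Σ_x p_n x * P0(θ, x) * ∇_θ φ θ x. 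-/
open Real Finset

/-!
Each summand of `J` is a function of the single real number `u = φ θ x`. With `c = ν * pn x > 0`,
`log (exp u / (exp u + c)) = u - log (exp u + c)` and `log (c / (exp u + c)) = log c - log (exp u + c)`
have derivatives `1 - P0` and `-P0` in `u`, so the formula follows from the chain rule and the
linearity of the gradient.
-/

namespace HasGradientAt

variable {F : Type*} [NormedAddCommGroup F] [InnerProductSpace ℝ F] [CompleteSpace F]
  {f g : F → ℝ} {f' g' x : F}

theorem add (hf : HasGradientAt f f' x) (hg : HasGradientAt g g' x) :
    HasGradientAt (fun y => f y + g y) (f' + g') x := by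
  rw [hasGradientAt_iff_hasFDerivAt, map_add]
  exact hf.hasFDerivAt.add hg.hasFDerivAt

theorem const_mul (hf : HasGradientAt f f' x) (c : ℝ) :
    HasGradientAt (fun y => c * f y) (c • f') x := by
  rw [hasGradientAt_iff_hasFDerivAt, map_smul]
  exact hf.hasFDerivAt.const_mul c

theorem fun_sum {ι : Type*} {s : Finset ι} {A : ι → F → ℝ} {A' : ι → F}
    (h : ∀ i ∈ s, HasGradientAt (A i) (A' i) x) :
    HasGradientAt (fun y => ∑ i ∈ s, A i y) (∑ i ∈ s, A' i) x := by
  rw [hasGradientAt_iff_hasFDerivAt, map_sum]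
  exact HasFDerivAt.fun_sum fun i hi => (h i hi).hasFDerivAt

end HasGradientAt

theorem HasDerivAt.comp_hasGradientAt {F : Type*} [NormedAddCommGroup F] [InnerProductSpace ℝ F]
    [CompleteSpace F] {h : ℝ → ℝ} {h' : ℝ} {f : F → ℝ} {f' x : F}
    (hh : HasDerivAt h h' (f x)) (hf : HasGradientAt f f' x) :
    HasGradientAt (h ∘ f) (h' • f') x := by
  rw [hasGradientAt_iff_hasFDerivAt, map_smul]
  exact hh.comp_hasFDerivAt x hf.hasFDerivAt

theorem hasDerivAt_log_exp_div_exp_add {c : ℝ} (hc : 0 < c) (u : ℝ) :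
    HasDerivAt (fun u => log (exp u / (exp u + c))) (1 - exp u / (exp u + c)) u := by
  have hpos : ∀ u, 0 < exp u + c := fun u => by positivity
  have hsplit : (fun u => log (exp u / (exp u + c))) = fun u => u - log (exp u + c) := by
    funext u
    rw [log_div (exp_pos u).ne' (hpos u).ne', log_exp]
  rw [hsplit]
  simpa using (hasDerivAt_id' u).fun_sub (((hasDerivAt_exp u).add_const c).log (hpos u).ne')

theorem hasDerivAt_log_div_exp_add {c : ℝ} (hc : 0 < c) (u : ℝ) :
    HasDerivAt (fun u => log (c / (exp u + c))) (-(exp u / (exp u + c))) u := by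
  have hpos : ∀ u, 0 < exp u + c := fun u => by positivity
  have hsplit : (fun u => log (c / (exp u + c))) = fun u => log c - log (exp u + c) := by
    funext u
    rw [log_div hc.ne' (hpos u).ne']
  rw [hsplit]
  simpa using (((hasDerivAt_exp u).add_const c).log (hpos u).ne').const_sub (log c)

theorem stmt_7_general {X : Type*} [Fintype X]
    (pd pn : X → ℝ)
    (hpn0 : ∀ x, 0 < pn x)
    (ν : ℝ) (hν : 0 < ν) (k : ℕ)
    (φ : EuclideanSpace ℝ (Fin k) → X → ℝ)
    (hφ : ∀ x, Differentiable ℝ (fun θ => φ θ x))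
    (J : EuclideanSpace ℝ (Fin k) → ℝ)
    (hJ : ∀ θ, J θ = ∑ x, pd x * Real.log (Real.exp (φ θ x) / (Real.exp (φ θ x) + ν * pn x))
        + ν * ∑ x, pn x * Real.log (ν * pn x / (Real.exp (φ θ x) + ν * pn x)))
    (P0 P1 : EuclideanSpace ℝ (Fin k) → X → ℝ)
    (hP0 : ∀ θ x, P0 θ x = Real.exp (φ θ x) / (Real.exp (φ θ x) + ν * pn x))
    (hP1 : ∀ θ x, P1 θ x = 1 - P0 θ x) :
    Differentiable ℝ J ∧
      ∀ θ, gradient J θ =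
        (∑ x, (pd x * P1 θ x) • gradient (fun θ' => φ θ' x) θ)
          - ν • ∑ x, (pn x * P0 θ x) • gradient (fun θ' => φ θ' x) θ := by
  have hgrad : ∀ θ, HasGradientAt J
      ((∑ x, (pd x * P1 θ x) • gradient (fun θ' => φ θ' x) θ)
        - ν • ∑ x, (pn x * P0 θ x) • gradient (fun θ' => φ θ' x) θ) θ := by
    intro θ
    have hc : ∀ x, 0 < ν * pn x := fun x => mul_pos hν (hpn0 x)
    have hφ' : ∀ x, HasGradientAt (fun θ' => φ θ' x) (gradient (fun θ' => φ θ' x) θ) θ :=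
      fun x => (hφ x θ).hasGradientAt
    have hdata := HasGradientAt.fun_sum fun x (_ : x ∈ univ) =>
      ((hasDerivAt_log_exp_div_exp_add (hc x) _).comp_hasGradientAt (hφ' x)).const_mul (pd x)
    have hnoise := (HasGradientAt.fun_sum fun x (_ : x ∈ univ) =>
      ((hasDerivAt_log_div_exp_add (hc x) _).comp_hasGradientAt (hφ' x)).const_mul
        (pn x)).const_mul ν
    convert hdata.add hnoise using 1
    · exact funext hJ
    · simp only [hP1, hP0, smul_smul, neg_smul, sum_neg_distrib, smul_neg, sub_eq_add_neg]
  exact ⟨fun θ => (hgrad θ).differentiableAt, fun θ => (hgrad θ).gradient⟩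

/-- Differentiability and gradient formula for the NCE objective
`J(θ) = Σ_x p_d x * log P0(θ,x) + ν Σ_x p_n x * log (ν p_n x / (exp (φ θ x) + ν p_n x))`
with `P0(θ,x) = exp (φ θ x) / (exp (φ θ x) + ν p_n x)` and `P1 = 1 - P0`:
`∇J(θ) = Σ_x p_d x * P1(θ,x) • ∇_θ φ θ x − ν • Σ_x p_n x * P0(θ,x) • ∇_θ φ θ x`. -/
theorem stmt_7 {X : Type*} [Fintype X] [Nonempty X]
    (pd pn : X → ℝ)
    (hpd0 : ∀ x, 0 ≤ pd x) (hpd1 : ∑ x, pd x = 1)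
    (hpn0 : ∀ x, 0 < pn x) (hpn1 : ∑ x, pn x = 1)
    (ν : ℝ) (hν : 0 < ν) (k : ℕ)
    (φ : EuclideanSpace ℝ (Fin k) → X → ℝ)
    (hφ : ∀ x, Differentiable ℝ (fun θ => φ θ x))
    (J : EuclideanSpace ℝ (Fin k) → ℝ)
    (hJ : ∀ θ, J θ = ∑ x, pd x * Real.log (Real.exp (φ θ x) / (Real.exp (φ θ x) + ν * pn x))
        + ν * ∑ x, pn x * Real.log (ν * pn x / (Real.exp (φ θ x) + ν * pn x)))
    (P0 P1 : EuclideanSpace ℝ (Fin k) → X → ℝ)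
    (hP0 : ∀ θ x, P0 θ x = Real.exp (φ θ x) / (Real.exp (φ θ x) + ν * pn x))
    (hP1 : ∀ θ x, P1 θ x = 1 - P0 θ x) :
    Differentiable ℝ J ∧
      ∀ θ, gradient J θ =
        (∑ x, (pd x * P1 θ x) • gradient (fun θ' => φ θ' x) θ)
          - ν • ∑ x, (pn x * P0 θ x) • gradient (fun θ' => φ θ' x) θ :=
  stmt_7_general pd pn hpn0 ν hν k φ hφ J hJ P0 P1 hP0 hP1
end
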